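/- There exists a constant C > 0 such that for every integer n ≥ 2 and every real t > 0 with λ_𝟏·t ≥ 1, one has ∑_{𝐢 ∈ {1,…,n−1}², 𝐢 ≠ (1,1)} e^{−λ_𝐢 t} ≤ C·e^{−(3/2)·λ_𝟏 t}. -/
import Mathlib

open scoped BigOperators

namespace DGFFStmt

abbrev Lam (n : ℕ) := Fin (n - 1) × Fin (n - 1)

noncomputable def lam1d (n i : ℕ) : ℝ := 1 - Real.cos (i * Real.pi / n)

noncomputable def lamB (n : ℕ) (i : Lam n) : ℝ :=
  (lam1d n ((i.1 : ℕ) + 1) + lam1d n ((i.2 : ℕ) + 1)) / 2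

noncomputable def lamOne (n : ℕ) : ℝ := 1 - Real.cos (Real.pi / n)

lemma lam1d_one {n : ℕ} (hn : 2 ≤ n) : lam1d n 1 = lamOne n := by
  unfold lam1d lamOne; norm_num

/-- quadratic lower bound for `lam1d`. -/
lemma lam1d_quad_lb {n k : ℕ} (hk1 : 1 ≤ k) (hkn : k ≤ n) :
    2 * (k:ℝ)^2 / n^2 ≤ lam1d n k := by
  have hπ := Real.pi_pos
  have hn0 : (0:ℝ) < n := by
    have : (1:ℝ) ≤ n := by exact_mod_cast hk1.trans hkn
    linarith
  have hx : |(k:ℝ) * Real.pi / n| ≤ Real.pi := by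
    rw [abs_of_nonneg (by positivity), div_le_iff₀ hn0]
    have : (k:ℝ) ≤ n := by exact_mod_cast hkn
    nlinarith
  have h := Real.cos_le_one_sub_mul_cos_sq hx
  have h2 : 2 / Real.pi ^ 2 * ((k:ℝ) * Real.pi / n) ^ 2 = 2 * (k:ℝ)^2 / n^2 := by
    field_simp
  rw [h2] at h
  unfold lam1d
  linarith

lemma lamOne_ub {n : ℕ} (hn : 2 ≤ n) : lamOne n ≤ Real.pi^2 / (2 * n^2) := by
  have h := Real.one_sub_sq_div_two_le_cos (x := Real.pi / n)
  have hn0 : (0:ℝ) < n := by positivity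
  unfold lamOne
  have he : (Real.pi / n)^2 / 2 = Real.pi^2 / (2 * n^2) := by field_simp
  linarith [he ▸ h]

lemma lamOne_pos {n : ℕ} (hn : 2 ≤ n) : 0 < lamOne n := by
  have h := lam1d_quad_lb (n := n) (k := 1) le_rfl (by omega)
  have hn0 : (0:ℝ) < n := by positivity
  rw [lam1d_one hn] at h
  have : (0:ℝ) < 2 * (1:ℝ)^2 / n^2 := by positivity
  linarith

/-- linear-in-k lower bound relative to `lamOne`. -/
lemma lam1d_ge_mul {n k : ℕ} (hn : 2 ≤ n) (hk1 : 1 ≤ k) (hkn : k ≤ n) :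
    (k:ℝ) / 5 * lamOne n ≤ lam1d n k := by
  have h1 := lam1d_quad_lb hk1 hkn
  have h2 := lamOne_ub hn
  have hn0 : (0:ℝ) < n := by positivity
  have hn2 : (0:ℝ) < (n:ℝ)^2 := by positivity
  have hk0 : (1:ℝ) ≤ k := by exact_mod_cast hk1
  have hπ : Real.pi ≤ 4 := Real.pi_le_four
  have hπ0 := Real.pi_pos
  have hπ2 : Real.pi^2 ≤ 16 := by nlinarith
  have step1 : (k:ℝ) / 5 * lamOne n ≤ (k:ℝ)/5 * (Real.pi^2 / (2*n^2)) :=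
    mul_le_mul_of_nonneg_left h2 (by positivity)
  have step2 : (k:ℝ)/5 * (Real.pi^2 / (2*n^2)) ≤ 2 * (k:ℝ)^2 / n^2 := by
    have e : (k:ℝ)/5 * (Real.pi^2/(2*(n:ℝ)^2)) = (k:ℝ)*Real.pi^2/(10*(n:ℝ)^2) := by ring
    rw [e, div_le_div_iff₀ (by positivity) (by positivity)]
    nlinarith [mul_nonneg (sub_nonneg.2 hπ2) (by positivity : (0:ℝ) ≤ (k:ℝ)*(n:ℝ)^2),
      mul_nonneg (mul_nonneg (sub_nonneg.2 hk0) (by positivity : (0:ℝ) ≤ (k:ℝ))) hn2.le]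
  linarith

/-- monotonicity of `lam1d` in `k`. -/
lemma lam1d_mono {n j k : ℕ} (hn : 1 ≤ n) (hjk : j ≤ k) (hkn : k ≤ n) :
    lam1d n j ≤ lam1d n k := by
  have hn0 : (0:ℝ) < n := by positivity
  have hπ0 := Real.pi_pos
  have h : Real.cos ((k:ℝ) * Real.pi / n) ≤ Real.cos ((j:ℝ) * Real.pi / n) := by
    apply Real.cos_le_cos_of_nonneg_of_le_pi
    · positivity
    · rw [div_le_iff₀ hn0]
      have : (k:ℝ) ≤ n := by exact_mod_cast hkn
      nlinarith
    · have hjk' : (j:ℝ) ≤ k := by exact_mod_cast hjk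
      gcongr
  unfold lam1d
  linarith

/-- `lam1d n 2 ≥ 2 * lamOne n`. -/
lemma lam1d_two_ge {n : ℕ} (hn : 2 ≤ n) : 2 * lamOne n ≤ lam1d n 2 := by
  have hn0 : (0:ℝ) < n := by positivity
  have hπ0 := Real.pi_pos
  have h2 : ((2:ℕ):ℝ) * Real.pi / n = 2 * (Real.pi / n) := by push_cast; ring
  have hc2 : Real.cos (2 * (Real.pi / n)) = 2 * Real.cos (Real.pi / n)^2 - 1 :=
    Real.cos_two_mul _
  have hcnn : 0 ≤ Real.cos (Real.pi / n) := by
    apply Real.cos_nonneg_of_mem_Icc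
    constructor
    · have : (0:ℝ) ≤ Real.pi / n := by positivity
      linarith
    · rw [div_le_div_iff₀ hn0 (by norm_num : (0:ℝ) < 2)]
      have : (2:ℝ) ≤ n := by exact_mod_cast hn
      nlinarith
  have hc1 : Real.cos (Real.pi / n) ≤ 1 := Real.cos_le_one _
  unfold lam1d lamOne
  rw [h2, hc2]
  nlinarith

/-- Per-term bound. -/
lemma term_bound {n : ℕ} (hn : 2 ≤ n) {t : ℝ} (ht : 0 < t) (h1t : 1 ≤ lamOne n * t)
    {p q : ℕ} (hp : 1 ≤ p) (hq : 1 ≤ q) (hpn : p ≤ n) (hqn : q ≤ n) (hpq : 2 ≤ p ∨ 2 ≤ q) :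
    Real.exp (-((lam1d n p + lam1d n q)/2) * t)
      ≤ Real.exp (3/2) * (Real.exp (-(1/10)) ^ p * Real.exp (-(1/10)) ^ q) *
        Real.exp (-(3/2) * lamOne n * t) := by
  have hμ := lamOne_pos hn
  set μ := lamOne n with hμdef
  set L : ℝ := (lam1d n p + lam1d n q)/2 with hLdef
  have hLp := lam1d_ge_mul hn hp hpn
  have hLq := lam1d_ge_mul hn hq hqn
  have haL : ((p:ℝ) + q) / 10 * μ ≤ L := by rw [hLdef]; linarith
  have h32 : 3/2 * μ ≤ L := by
    have h2μ := lam1d_two_ge hn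
    have h1μ : μ ≤ lam1d n 1 := (lam1d_one hn).ge
    rcases hpq with h | h
    · have := lam1d_mono (by omega) h hpn
      have := lam1d_mono (n := n) (j := 1) (k := q) (by omega) hq hqn
      rw [hLdef]; linarith
    · have := lam1d_mono (by omega) h hqn
      have := lam1d_mono (n := n) (j := 1) (k := p) (by omega) hp hpn
      rw [hLdef]; linarith
  have hrw : Real.exp (3/2) * (Real.exp (-(1/10)) ^ p * Real.exp (-(1/10)) ^ q) *
        Real.exp (-(3/2) * μ * t)
      = Real.exp (3/2 + (p:ℝ) * -(1/10) + (q:ℝ) * -(1/10) + -(3/2) * μ * t) := by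
    rw [← Real.exp_nat_mul, ← Real.exp_nat_mul, ← Real.exp_add, ← Real.exp_add,
      ← Real.exp_add]
    congr 1
    ring
  rw [hrw]
  apply Real.exp_le_exp.mpr
  have key : 0 ≤ (L - 3/2 * μ) * (μ * t - 1) :=
    mul_nonneg (by linarith) (by linarith)
  nlinarith [key, haL, h32, hμ, mul_pos hμ ht]

lemma geom_bound (m : ℕ) :
    ∑ i : Fin m, Real.exp (-(1/10)) ^ ((i:ℕ)+1) ≤ (1 - Real.exp (-(1/10)))⁻¹ := by
  set r : ℝ := Real.exp (-(1/10)) with hr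
  have hr0 : 0 < r := Real.exp_pos _
  have hr1 : r < 1 := Real.exp_lt_one_iff.mpr (by norm_num)
  calc ∑ i : Fin m, r ^ ((i:ℕ)+1) ≤ ∑ i : Fin m, r ^ (i:ℕ) := by
        apply Finset.sum_le_sum
        intro i _
        exact pow_le_pow_of_le_one hr0.le hr1.le (by omega)
    _ = ∑ i ∈ Finset.range m, r ^ i := by
        rw [Finset.sum_range fun i => r ^ i]
    _ ≤ r ^ 0 / (1 - r) := by
        rw [Finset.range_eq_Ico]
        exact geom_sum_Ico_le_of_lt_one hr0.le hr1
    _ = (1 - r)⁻¹ := by rw [pow_zero, one_div]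

/-- The contribution of the eigenvalues `λ_𝐢` with `𝐢 ≠ (1,1)` to the heat kernel:
`∑_{𝐢 ≠ (1,1)} e^{−λ_𝐢 t} ≤ C e^{−(3/2)λ_𝟏 t}` whenever `λ_𝟏 t ≥ 1`.
(The index `𝐢 = (1,1)` corresponds to the pair of Fin-values `(0,0)`.) -/
theorem sum_exp_higher_modes :
    ∃ C : ℝ, 0 < C ∧ ∀ n : ℕ, 2 ≤ n → ∀ t : ℝ, 0 < t → 1 ≤ lamOne n * t →
      ∑ i : Lam n, (if (i.1 : ℕ) = 0 ∧ (i.2 : ℕ) = 0 then 0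
          else Real.exp (-(lamB n i) * t))
        ≤ C * Real.exp (-(3 / 2) * lamOne n * t) := by
  set r : ℝ := Real.exp (-(1/10)) with hrdef
  have hr0 : 0 < r := Real.exp_pos _
  have hr1 : r < 1 := Real.exp_lt_one_iff.mpr (by norm_num)
  have hr1' : 0 < 1 - r := by linarith
  refine ⟨Real.exp (3/2) * ((1 - r)⁻¹)^2, by positivity, ?_⟩
  intro n hn t ht h1t
  have hμ := lamOne_pos hn
  have hterm : ∀ i : Lam n,
      (if (i.1 : ℕ) = 0 ∧ (i.2 : ℕ) = 0 then 0 else Real.exp (-(lamB n i) * t))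
      ≤ Real.exp (3/2) * (r ^ ((i.1:ℕ)+1) * r ^ ((i.2:ℕ)+1)) *
          Real.exp (-(3 / 2) * lamOne n * t) := by
    intro i
    by_cases hi : (i.1 : ℕ) = 0 ∧ (i.2 : ℕ) = 0
    · rw [if_pos hi]; positivity
    · rw [if_neg hi]
      have h1 := i.1.isLt
      have h2 := i.2.isLt
      have := term_bound hn ht h1t (p := (i.1:ℕ)+1) (q := (i.2:ℕ)+1)
        (by omega) (by omega) (by omega) (by omega)
        (by rcases Decidable.not_and_iff_or_not.mp hi with h | h
            · left; omega
            · right; omega)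
      exact this
  calc ∑ i : Lam n, (if (i.1 : ℕ) = 0 ∧ (i.2 : ℕ) = 0 then 0
          else Real.exp (-(lamB n i) * t))
      ≤ ∑ i : Lam n, Real.exp (3/2) * (r ^ ((i.1:ℕ)+1) * r ^ ((i.2:ℕ)+1)) *
          Real.exp (-(3 / 2) * lamOne n * t) := Finset.sum_le_sum fun i _ => hterm i
    _ = Real.exp (3/2) * ((∑ i : Fin (n-1), r ^ ((i:ℕ)+1)) *
          (∑ i : Fin (n-1), r ^ ((i:ℕ)+1))) * Real.exp (-(3 / 2) * lamOne n * t) := by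
        rw [Finset.sum_mul_sum, ← Fintype.sum_prod_type']
        rw [← Finset.sum_mul, ← Finset.mul_sum]
    _ ≤ Real.exp (3/2) * ((1 - r)⁻¹)^2 * Real.exp (-(3 / 2) * lamOne n * t) := by
        apply mul_le_mul_of_nonneg_right ?_ (Real.exp_pos _).le
        apply mul_le_mul_of_nonneg_left ?_ (Real.exp_pos _).le
        have hg := geom_bound (n-1)
        have hnn : 0 ≤ ∑ i : Fin (n-1), r ^ ((i:ℕ)+1) :=
          Finset.sum_nonneg fun i _ => by positivity
        calc (∑ i : Fin (n-1), r ^ ((i:ℕ)+1)) * (∑ i : Fin (n-1), r ^ ((i:ℕ)+1))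
            ≤ (1-r)⁻¹ * (1-r)⁻¹ := mul_le_mul hg hg hnn (by positivity)
          _ = ((1-r)⁻¹)^2 := by ring
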